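/- For integers p, q with |p|, |q| > 1, the group G = ⟨x, y | x^p = y^q⟩ contains a generalized torsion element, namely the commutator [x, y] = xyx⁻¹y⁻¹; in particular, some non-empty finite product of conjugates of [x, y] equals the identity while [x, y] ≠ 1. -/

import Mathlib

/-!
The relation makes `x ^ p = y ^ q` central, so `x ^ |p|` commutes with `y`; the conjugates of
`[x, y]` by `x ^ (k - 1), …, x, 1` multiply out telescopically to `[x ^ k, y]`, which is trivial
for `k = |p|`. On the other hand `[x, y] ≠ 1`: in the regular wreath product `ℤ/|p| ≀ ℤ/|q|`, a
generator of the base group supported at one point and a generator of the top group satisfy the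
relation (both sides are `1`) but do not commute.
-/

def pqRel (p q : ℤ) : Set (FreeGroup (Fin 2)) :=
  {FreeGroup.of 0 ^ p * (FreeGroup.of 1 ^ q)⁻¹}

def xg (p q : ℤ) : PresentedGroup (pqRel p q) := PresentedGroup.of 0
def yg (p q : ℤ) : PresentedGroup (pqRel p q) := PresentedGroup.of 1

open scoped commutatorElement

section Telescoping

variable {G : Type*} [Group G]

theorem Commute.pow_natAbs_left {a b : G} {n : ℤ} (h : Commute (a ^ n) b) :
    Commute (a ^ n.natAbs) b := by
  rw [← zpow_natCast, ← Int.mul_sign_self, zpow_mul]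
  exact h.zpow_left _

theorem prod_ofFn_conj_pow_commutatorElement (x y : G) (k : ℕ) :
    (List.ofFn fun i : Fin k => x ^ (i.rev : ℕ) * ⁅x, y⁆ * (x ^ (i.rev : ℕ))⁻¹).prod
      = ⁅x ^ k, y⁆ := by
  induction k with
  | zero => simp
  | succ k ih =>
    simp only [List.ofFn_succ, List.prod_cons, Fin.rev_succ, Fin.val_castSucc, ih,
      Fin.rev_zero, Fin.val_last]
    simp only [commutatorElement_def]
    group

end Telescoping

namespace RegularWreathProduct

variable {D Q : Type*} [Group D] [Group Q]

def ofLeft : (Q → D) →* D ≀ᵣ Q where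
  toFun f := ⟨f, 1⟩
  map_one' := rfl
  map_mul' _ _ := by ext <;> simp

theorem not_commute_ofLeft_mulSingle_inl [DecidableEq Q] {d : D} {t : Q} (hd : d ≠ 1)
    (ht : t ≠ 1) : ¬Commute (ofLeft (Pi.mulSingle 1 d)) (inl t) := by
  intro h
  exact hd (by simpa [ofLeft, Pi.mulSingle_apply, ht] using congrFun (congrArg left h.eq) 1)

end RegularWreathProduct

theorem Multiplicative.ofAdd_one_ne_one_and_zpow_eq_one {n : ℤ} (hn : 1 < |n|) :
    ofAdd (1 : ZMod n.natAbs) ≠ 1 ∧ ofAdd (1 : ZMod n.natAbs) ^ n = 1 := by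
  have : Fact (1 < n.natAbs) := ⟨by rwa [Int.abs_eq_natAbs, Nat.one_lt_cast] at hn⟩
  refine ⟨ofAdd_eq_one.not.mpr one_ne_zero, ?_⟩
  rw [← ofAdd_zsmul, zsmul_one, ofAdd_eq_one, ZMod.intCast_zmod_eq_zero_iff_dvd]
  simp

section PQGroup

variable {p q : ℤ}

theorem xg_zpow_eq_yg_zpow : xg p q ^ p = yg p q ^ q :=
  PresentedGroup.mk_eq_mk_of_mul_inv_mem rfl

theorem commute_xg_pow_natAbs_yg : Commute (xg p q ^ p.natAbs) (yg p q) := by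
  apply Commute.pow_natAbs_left
  rw [xg_zpow_eq_yg_zpow]
  exact (Commute.refl _).zpow_left q

variable {H : Type*} [Group H] {a b : H}

def pqLift (h : a ^ p = b ^ q) : PresentedGroup (pqRel p q) →* H :=
  PresentedGroup.toGroup (f := ![a, b]) <| by
    rintro r rfl
    simp [h]

theorem pqLift_xg (h : a ^ p = b ^ q) : pqLift h (xg p q) = a := PresentedGroup.toGroup.of _
theorem pqLift_yg (h : a ^ p = b ^ q) : pqLift h (yg p q) = b := PresentedGroup.toGroup.of _

theorem commutatorElement_xg_yg_ne_one_of_not_commute (h : a ^ p = b ^ q)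
    (hab : ¬Commute a b) : ⁅xg p q, yg p q⁆ ≠ 1 := by
  rw [Ne, commutatorElement_eq_one_iff_commute]
  intro hxy
  have := hxy.map (pqLift h)
  rw [pqLift_xg, pqLift_yg] at this
  exact hab this

theorem commutatorElement_xg_yg_ne_one (hp : 1 < |p|) (hq : 1 < |q|) :
    ⁅xg p q, yg p q⁆ ≠ 1 := by
  obtain ⟨hd, hdp⟩ := Multiplicative.ofAdd_one_ne_one_and_zpow_eq_one hp
  obtain ⟨ht, htq⟩ := Multiplicative.ofAdd_one_ne_one_and_zpow_eq_one hq
  refine commutatorElement_xg_yg_ne_one_of_not_commute ?_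
    (RegularWreathProduct.not_commute_ofLeft_mulSingle_inl hd ht)
  rw [← map_zpow, ← map_zpow, ← Pi.mulSingle_zpow, hdp, htq, Pi.mulSingle_one, map_one,
    map_one]

end PQGroup

theorem stmt8 (p q : ℤ) (hp : 1 < |p|) (hq : 1 < |q|) :
    (xg p q * yg p q * (xg p q)⁻¹ * (yg p q)⁻¹ ≠ 1) ∧
    ∃ k : ℕ, 1 ≤ k ∧ ∃ xs : Fin k → PresentedGroup (pqRel p q),
      (List.ofFn (fun i =>
        xs i * (xg p q * yg p q * (xg p q)⁻¹ * (yg p q)⁻¹) * (xs i)⁻¹)).prod = 1 := by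
  refine ⟨commutatorElement_xg_yg_ne_one hp hq, p.natAbs, ?_,
    fun i => xg p q ^ (i.rev : ℕ), ?_⟩
  · rw [Int.abs_eq_natAbs] at hp
    omega
  · rw [← commutatorElement_def, prod_ofFn_conj_pow_commutatorElement,
      commutatorElement_eq_one_iff_commute]
    exact commute_xg_pow_natAbs_yg
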